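/- (Jointly concave GAN discriminator value) Define f(a,b) = a log σ(t*) + b log(1-σ(t*)) evaluated at the optimum t* = log(a/b), i.e., f(a,b) = a log(a/(a+b)) + b log(b/(a+b)) for a, b > 0. Then for two densities μ(z) and ν(z), the optimal value of the discriminator objective ∫ [μ log σ(T) + ν log(1-σ(T))] dz equals -2 log 2 + 2·JS(μ,ν), where JS is the Jensen-Shannon divergence; in particular the optimal value is at least -2 log 2, with equality iff μ = ν a.e. -/

import Mathlib

/-!
Writing `m = (a + b) / 2`, one has `a log (a / m) = a log (a / (a + b)) + a log 2`, so integrating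
against the unit-mass densities `μ, ν` turns the optimal discriminator value into
`-2 log 2 + 2 JS(μ, ν)`. For the sign, `x log (x / y) = y klFun (x / y) + (x - y)` with
`klFun t = t log t + 1 - t ≥ 0`, vanishing only at `t = 1`; at `y = m` the linear parts of the two
terms cancel, so the Jensen–Shannon integrand is `m (klFun (a / m) + klFun (b / m)) ≥ 0`, with
equality iff `a = b`.
-/

open MeasureTheory Real InformationTheory

noncomputable section

/-- The discriminator objective `a log σ(t) + b log (1 - σ(t))` at its maximizer `t = log (a / b)`. -/
def ganValue (a b : ℝ) : ℝ := a * log (a / (a + b)) + b * log (b / (a + b))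

def jensenShannon {α : Type*} [MeasurableSpace α] (f g : α → ℝ) (μ : Measure α) : ℝ :=
  (1 / 2) * (∫ z, f z * log (f z / ((f z + g z) / 2)) ∂μ) +
    (1 / 2) * (∫ z, g z * log (g z / ((f z + g z) / 2)) ∂μ)

end

section Pointwise

variable {a b x y : ℝ}

lemma mul_log_div_eq_mul_klFun_add (hy : 0 < y) :
    x * log (x / y) = y * klFun (x / y) + (x - y) := by
  rw [klFun_apply]
  field_simp
  ring

lemma mul_log_div_half (ha : 0 < a) (hy : 0 < y) :
    a * log (a / (y / 2)) = a * log (a / y) + a * log 2 := by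
  rw [div_div_eq_mul_div, log_div (by positivity) hy.ne', log_mul ha.ne' two_ne_zero,
    log_div ha.ne' hy.ne']
  ring

lemma abs_mul_log_div_add_le (ha : 0 < a) (hb : 0 < b) : |a * log (a / (a + b))| ≤ b := by
  have hq : 0 < a / (a + b) := by positivity
  have hupper : log (a / (a + b)) ≤ 0 :=
    log_nonpos hq.le ((div_le_one (by positivity)).2 (by linarith))
  have hlower : -b ≤ a * log (a / (a + b)) :=
    calc -b = a * (1 - (a / (a + b))⁻¹) := by field_simp; ring
      _ ≤ a * log (a / (a + b)) := by gcongr; exact one_sub_inv_le_log_of_pos hq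
  rw [abs_le]
  constructor <;> nlinarith

lemma mul_log_div_half_add_eq_mul_klFun (ha : 0 < a) (hb : 0 < b) :
    a * log (a / ((a + b) / 2)) + b * log (b / ((a + b) / 2)) =
      (a + b) / 2 * (klFun (a / ((a + b) / 2)) + klFun (b / ((a + b) / 2))) := by
  have hm : 0 < (a + b) / 2 := by positivity
  rw [mul_log_div_eq_mul_klFun_add hm, mul_log_div_eq_mul_klFun_add hm]
  ring

lemma mul_log_div_half_add_nonneg (ha : 0 < a) (hb : 0 < b) :
    0 ≤ a * log (a / ((a + b) / 2)) + b * log (b / ((a + b) / 2)) := by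
  rw [mul_log_div_half_add_eq_mul_klFun ha hb]
  have := klFun_nonneg (x := a / ((a + b) / 2)) (by positivity)
  have := klFun_nonneg (x := b / ((a + b) / 2)) (by positivity)
  positivity

lemma mul_log_div_half_add_eq_zero_iff (ha : 0 < a) (hb : 0 < b) :
    a * log (a / ((a + b) / 2)) + b * log (b / ((a + b) / 2)) = 0 ↔ a = b := by
  have hm : 0 < (a + b) / 2 := by positivity
  rw [mul_log_div_half_add_eq_mul_klFun ha hb, mul_eq_zero, or_iff_right hm.ne',
    add_eq_zero_iff_of_nonneg (klFun_nonneg (by positivity)) (klFun_nonneg (by positivity)),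
    klFun_eq_zero_iff (by positivity), klFun_eq_zero_iff (by positivity),
    div_eq_one_iff_eq hm.ne', div_eq_one_iff_eq hm.ne']
  constructor
  · rintro ⟨ha', -⟩
    linarith
  · rintro rfl
    constructor <;> ring

end Pointwise

section Integral

variable {α : Type*} [MeasurableSpace α] {μ : Measure α} {f g s : α → ℝ}

lemma integrable_ganValue_summands (hf : Integrable f μ) (hg : Integrable g μ)
    (hf_pos : ∀ z, 0 < f z) (hg_pos : ∀ z, 0 < g z) :
    Integrable (fun z => f z * log (f z / (f z + g z))) μ ∧
      Integrable (fun z => g z * log (g z / (f z + g z))) μ := by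
  have hf' := hf.aemeasurable
  have hg' := hg.aemeasurable
  refine ⟨hg.mono' ?_ (.of_forall fun z => ?_), hf.mono' ?_ (.of_forall fun z => ?_)⟩
  · exact (hf'.mul (hf'.div (hf'.add hg')).log).aestronglyMeasurable
  · exact abs_mul_log_div_add_le (hf_pos z) (hg_pos z)
  · exact (hg'.mul (hg'.div (hf'.add hg')).log).aestronglyMeasurable
  · rw [add_comm]
    exact abs_mul_log_div_add_le (hg_pos z) (hf_pos z)

lemma integrable_mul_log_div_half (hf : Integrable f μ)
    (hfs : Integrable (fun z => f z * log (f z / s z)) μ)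
    (hf_pos : ∀ z, 0 < f z) (hs_pos : ∀ z, 0 < s z) :
    Integrable (fun z => f z * log (f z / (s z / 2))) μ :=
  (hfs.add (hf.mul_const (log 2))).congr
    (.of_forall fun z => (mul_log_div_half (hf_pos z) (hs_pos z)).symm)

lemma integral_mul_log_div_half (hf : Integrable f μ)
    (hfs : Integrable (fun z => f z * log (f z / s z)) μ)
    (hf_pos : ∀ z, 0 < f z) (hs_pos : ∀ z, 0 < s z) :
    ∫ z, f z * log (f z / (s z / 2)) ∂μ =
      ∫ z, f z * log (f z / s z) ∂μ + (∫ z, f z ∂μ) * log 2 := by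
  simp_rw [mul_log_div_half (hf_pos _) (hs_pos _)]
  rw [integral_add hfs (hf.mul_const _), integral_mul_const]

end Integral

section JensenShannon

variable {α : Type*} [MeasurableSpace α] {μ : Measure α} {f g : α → ℝ}

lemma integral_ganValue_eq_jensenShannon (hf : Integrable f μ) (hg : Integrable g μ)
    (hf_pos : ∀ z, 0 < f z) (hg_pos : ∀ z, 0 < g z)
    (hf_one : ∫ z, f z ∂μ = 1) (hg_one : ∫ z, g z ∂μ = 1) :
    ∫ z, ganValue (f z) (g z) ∂μ = -2 * log 2 + 2 * jensenShannon f g μ := by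
  obtain ⟨hfs, hgs⟩ := integrable_ganValue_summands hf hg hf_pos hg_pos
  have hs_pos : ∀ z, 0 < f z + g z := fun z => add_pos (hf_pos z) (hg_pos z)
  rw [jensenShannon, integral_mul_log_div_half hf hfs hf_pos hs_pos,
    integral_mul_log_div_half hg hgs hg_pos hs_pos, hf_one, hg_one]
  unfold ganValue
  rw [integral_add hfs hgs]
  ring

lemma jensenShannon_eq_half_integral (hf : Integrable f μ) (hg : Integrable g μ)
    (hf_pos : ∀ z, 0 < f z) (hg_pos : ∀ z, 0 < g z) :
    jensenShannon f g μ = (1 / 2) * ∫ z, (f z * log (f z / ((f z + g z) / 2)) +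
      g z * log (g z / ((f z + g z) / 2))) ∂μ := by
  obtain ⟨hfs, hgs⟩ := integrable_ganValue_summands hf hg hf_pos hg_pos
  have hs_pos : ∀ z, 0 < f z + g z := fun z => add_pos (hf_pos z) (hg_pos z)
  rw [jensenShannon, integral_add (integrable_mul_log_div_half hf hfs hf_pos hs_pos)
    (integrable_mul_log_div_half hg hgs hg_pos hs_pos)]
  ring

lemma jensenShannon_nonneg (hf : Integrable f μ) (hg : Integrable g μ)
    (hf_pos : ∀ z, 0 < f z) (hg_pos : ∀ z, 0 < g z) : 0 ≤ jensenShannon f g μ := by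
  rw [jensenShannon_eq_half_integral hf hg hf_pos hg_pos]
  exact mul_nonneg (by norm_num)
    (integral_nonneg fun z => mul_log_div_half_add_nonneg (hf_pos z) (hg_pos z))

lemma jensenShannon_eq_zero_iff (hf : Integrable f μ) (hg : Integrable g μ)
    (hf_pos : ∀ z, 0 < f z) (hg_pos : ∀ z, 0 < g z) :
    jensenShannon f g μ = 0 ↔ f =ᵐ[μ] g := by
  obtain ⟨hfs, hgs⟩ := integrable_ganValue_summands hf hg hf_pos hg_pos
  have hs_pos : ∀ z, 0 < f z + g z := fun z => add_pos (hf_pos z) (hg_pos z)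
  have hint := (integrable_mul_log_div_half hf hfs hf_pos hs_pos).add
    (integrable_mul_log_div_half hg hgs hg_pos hs_pos)
  rw [jensenShannon_eq_half_integral hf hg hf_pos hg_pos, mul_eq_zero, or_iff_right (by norm_num),
    integral_eq_zero_iff_of_nonneg (fun z => mul_log_div_half_add_nonneg (hf_pos z) (hg_pos z))
      hint]
  exact Filter.eventually_congr
    (.of_forall fun z => mul_log_div_half_add_eq_zero_iff (hf_pos z) (hg_pos z))

end JensenShannon

theorem gan_optimal_value_jensen_shannon_general (P : ℕ)
    (μd νd : EuclideanSpace ℝ (Fin P) → ℝ)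
    (hμ_pos : ∀ z, 0 < μd z) (hν_pos : ∀ z, 0 < νd z)
    (hμ_one : ∫ z, μd z = 1) (hν_one : ∫ z, νd z = 1)
    (V JS : ℝ)
    (hV : V = ∫ z, (μd z * Real.log (μd z / (μd z + νd z)) +
                    νd z * Real.log (νd z / (μd z + νd z))))
    (hJS : JS = (1 / 2) * (∫ z, μd z * Real.log (μd z / ((μd z + νd z) / 2))) +
                (1 / 2) * (∫ z, νd z * Real.log (νd z / ((μd z + νd z) / 2)))) :
    V = -2 * Real.log 2 + 2 * JS ∧
    -2 * Real.log 2 ≤ V ∧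
    (V = -2 * Real.log 2 ↔ ∀ᵐ z, μd z = νd z) := by
  have hμ : Integrable μd := .of_integral_ne_zero (hμ_one ▸ one_ne_zero)
  have hν : Integrable νd := .of_integral_ne_zero (hν_one ▸ one_ne_zero)
  obtain rfl : JS = jensenShannon μd νd volume := hJS
  obtain rfl : V = ∫ z, ganValue (μd z) (νd z) := hV
  have hV_JS := integral_ganValue_eq_jensenShannon hμ hν hμ_pos hν_pos hμ_one hν_one
  have hJS_nonneg := jensenShannon_nonneg hμ hν hμ_pos hν_pos
  refine ⟨hV_JS, by linarith, ?_⟩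
  rw [hV_JS]
  refine Iff.trans ?_ (jensenShannon_eq_zero_iff hμ hν hμ_pos hν_pos)
  constructor <;> intro h <;> linarith

/-- Jointly concave GAN discriminator value: for positive
densities `μd` and `νd` on ℝ^P, the optimal value of the discriminator
objective (obtained by the pointwise maximizer `t* = log(a/b)`),
`V = ∫ [μ log(μ/(μ+ν)) + ν log(ν/(μ+ν))]`, equals `-2 log 2 + 2·JS(μ,ν)`
where `JS` is the Jensen-Shannon divergence; in particular `V ≥ -2 log 2`,
with equality iff `μ = ν` a.e. -/
theorem gan_optimal_value_jensen_shannon (P : ℕ)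
    (μd νd : EuclideanSpace ℝ (Fin P) → ℝ)
    (hμ_pos : ∀ z, 0 < μd z) (hν_pos : ∀ z, 0 < νd z)
    (hμ_one : ∫ z, μd z = 1) (hν_one : ∫ z, νd z = 1)
    (V JS : ℝ)
    (hV : V = ∫ z, (μd z * Real.log (μd z / (μd z + νd z)) +
                    νd z * Real.log (νd z / (μd z + νd z))))
    (hJS : JS = (1 / 2) * (∫ z, μd z * Real.log (μd z / ((μd z + νd z) / 2))) +
                (1 / 2) * (∫ z, νd z * Real.log (νd z / ((μd z + νd z) / 2))))
    (hint1 : Integrable (fun z => μd z * Real.log (μd z / (μd z + νd z))))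
    (hint2 : Integrable (fun z => νd z * Real.log (νd z / (μd z + νd z)))) :
    V = -2 * Real.log 2 + 2 * JS ∧
    -2 * Real.log 2 ≤ V ∧
    (V = -2 * Real.log 2 ↔ ∀ᵐ z, μd z = νd z) :=
  gan_optimal_value_jensen_shannon_general P μd νd hμ_pos hν_pos hμ_one hν_one V JS hV hJS
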